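/- For r ≥ 2 and n ≥ 2: the assignment ε(ρ_i) = ρ_i^{-1} for 0 ≤ i ≤ n-1 extends to an automorphism ε of B(r,n); the assignment Δ(ρ_0) = (ρ_{n-1}⋯ρ_1ρ_0ρ_1⋯ρ_{n-1})^{-1}, Δ(ρ_i) = ρ_{n-i} for 1 ≤ i ≤ n-1 extends to an automorphism Δ of B(r,n); both ε and Δ send ζ_n to ζ_n^{-1}; Δ(X_i) = X_{n-i+1}^{-1} for 1 ≤ i ≤ n; and both ε and Δ map the subgroup P(r,n) onto itself. -/
import Mathlib


/-!
The monomial braid group `B(r,n)` (independent of `r`) is presented with generators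
`ρ_0, …, ρ_{n-1}` and relations `(ρ_0ρ_1)^2 = (ρ_1ρ_0)^2`,
`ρ_iρ_{i+1}ρ_i = ρ_{i+1}ρ_iρ_{i+1}` (`1 ≤ i ≤ n-2`), `ρ_iρ_j = ρ_jρ_i` (`|i-j| > 1`).
We realize it as a presented group on generators indexed by `ℕ`, where the superfluous
generators `ρ_k` for `k ≥ n` are killed by extra relators.  The full monomial group
`G(r,n)` is the quotient of `B(r,n)` by the relations `ρ_0^r = ρ_1^2 = ⋯ = ρ_{n-1}^2 = 1`,
and the pure monomial braid group `P(r,n)` is the kernel of the quotient map.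
-/

namespace MonomialBraid

/-- Generator `ρ_k` of the free group. -/
def g (k : ℕ) : FreeGroup ℕ := FreeGroup.of k

/-- Relators of the monomial braid group `B(r,n)` (independent of `r`),
together with relators killing the junk generators `ρ_k`, `k ≥ n`. -/
def brels (n : ℕ) : Set (FreeGroup ℕ) :=
  {w | ∃ k, n ≤ k ∧ w = g k} ∪
  {w | 2 ≤ n ∧ w = (g 0 * g 1) ^ 2 * ((g 1 * g 0) ^ 2)⁻¹} ∪
  {w | ∃ i, 1 ≤ i ∧ i + 1 ≤ n - 1 ∧
      w = g i * g (i + 1) * g i * (g (i + 1) * g i * g (i + 1))⁻¹} ∪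
  {w | ∃ i j, i + 2 ≤ j ∧ j ≤ n - 1 ∧ w = g i * g j * (g j * g i)⁻¹}

/-- The monomial braid group `B(r,n)` (independent of `r`). -/
abbrev B (n : ℕ) := PresentedGroup (brels n)

/-- The generator `ρ_k` of `B(r,n)`. -/
def rh (n k : ℕ) : B n := PresentedGroup.of k

/-- `ζ_n = (ρ_0 ρ_1 ⋯ ρ_{n-1})^n`. -/
def zeta (n : ℕ) : B n := (((List.range n).map (rh n)).prod) ^ n

/-- `X_i = ρ_{i-1} ⋯ ρ_2 ρ_1 ρ_0 ρ_1 ρ_2 ⋯ ρ_{i-1}` for `1 ≤ i ≤ n`. -/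
def XX (n i : ℕ) : B n :=
  (((List.range (i - 1)).reverse.map fun k => rh n (k + 1)).prod) * rh n 0 *
    (((List.range (i - 1)).map fun k => rh n (k + 1)).prod)

/-- `C_j = ρ_{j-1} ⋯ ρ_2 ρ_1 ρ_0^r ρ_1⁻¹ ρ_2⁻¹ ⋯ ρ_{j-1}⁻¹` for `1 ≤ j ≤ n`. -/
def CC (r n j : ℕ) : B n :=
  (((List.range (j - 1)).reverse.map fun k => rh n (k + 1)).prod) * rh n 0 ^ r *
    ((((List.range (j - 1)).reverse.map fun k => rh n (k + 1)).prod))⁻¹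

/-- `A^{(q)}(i,j) = X_i^{q-r} ⋅ ρ_{j-1} ⋯ ρ_{i+1} ρ_i^2 ρ_{i+1}⁻¹ ⋯ ρ_{j-1}⁻¹ ⋅ X_i^{r-q}`
for `1 ≤ i < j ≤ n`, `1 ≤ q ≤ r`. -/
def Aq (r n i j q : ℕ) : B n :=
  XX n i ^ ((q : ℤ) - (r : ℤ)) *
    ((((List.range (j - 1 - i)).reverse.map fun k => rh n (i + 1 + k)).prod) * rh n i ^ 2 *
      ((((List.range (j - 1 - i)).reverse.map fun k => rh n (i + 1 + k)).prod))⁻¹) *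
    XX n i ^ ((r : ℤ) - (q : ℤ))

/-- `A^{[q]}(i,j) = A^{(q)}(i,j) A^{(q+1)}(i,j) ⋯ A^{(r-1)}(i,j)` (for `q < r`). -/
def Abr (r n i j q : ℕ) : B n :=
  ((List.range (r - q)).map fun t => Aq r n i j (q + t)).prod

/-- `V^{(q)}(i,j) = A^{(q)}(i,j) A^{(q)}(i+1,j) ⋯ A^{(q)}(j-1,j)`. -/
def VV (r n i j q : ℕ) : B n :=
  ((List.range (j - i)).map fun t => Aq r n (i + t) j q).prod

/-- `D_k = A^{[1]}(k-1,k) A^{[1]}(k-2,k) ⋯ A^{[1]}(1,k) ⋅ C_k ⋅ V^{(r)}(1,k)`. -/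
def DD (r n k : ℕ) : B n :=
  (((List.range (k - 1)).map fun t => Abr r n (k - 1 - t) k 1).prod) * CC r n k * VV r n 1 k r

/-- The relations defining the full monomial group `G(r,n)` as a quotient of `B(r,n)`:
`ρ_0^r = ρ_1^2 = ⋯ = ρ_{n-1}^2 = 1`. -/
def grels (r n : ℕ) : Set (B n) :=
  {w | w = rh n 0 ^ r} ∪ {w | ∃ i, 1 ≤ i ∧ i ≤ n - 1 ∧ w = rh n i ^ 2}

/-- The normal closure of the relations of `G(r,n)` in `B(r,n)`; thus
`G(r,n) = B(r,n) ⧸ NG r n`. -/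
def NG (r n : ℕ) : Subgroup (B n) := Subgroup.normalClosure (grels r n)

instance NG_normal (r n : ℕ) : (NG r n).Normal := Subgroup.normalClosure_normal

/-- The pure monomial braid group `P(r,n)`, the kernel of the quotient map
`B(r,n) → G(r,n)`. -/
def Pm (r n : ℕ) : Subgroup (B n) := MonoidHom.ker (QuotientGroup.mk' (NG r n))



/-! ### Auxiliary machinery -/

section Generic
variable {G : Type*} [Group G]

private lemma key_low (a b X : G) (hb : a*b*a = b*a*b) (hc : b*X = X*b) :
    a * (b*(a*X*a)*b) = (b*(a*X*a)*b) * a := by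
  have hb' : ∀ t : G, a*(b*(a*t)) = b*(a*(b*t)) := by
    intro t; rw [← mul_assoc, ← mul_assoc, hb, mul_assoc, mul_assoc]
  have hc2 : ∀ t : G, b*(X*t) = X*(b*t) := by
    intro t; rw [← mul_assoc, hc, mul_assoc]
  simp only [mul_assoc]
  rw [hb' (X*(a*b)), hc2 (a*b), show b*(a*b) = a*(b*a) from by simpa [mul_assoc] using hb.symm]

private lemma key_step (a b X : G) (hb : a*b*a = b*a*b) (hc : b*X = X*b)
    (ih : X*(a*X*a) = (a*X*a)*X) :
    (a*X*a) * (b*(a*X*a)*b) = (b*(a*X*a)*b) * (a*X*a) := by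
  have hb' : ∀ t : G, a*(b*(a*t)) = b*(a*(b*t)) := by
    intro t; rw [← mul_assoc, ← mul_assoc, hb, mul_assoc, mul_assoc]
  have hbr : ∀ t : G, b*(a*(b*t)) = a*(b*(a*t)) := fun t => (hb' t).symm
  have hc1 : ∀ t : G, X*(b*t) = b*(X*t) := by
    intro t; rw [← mul_assoc, ← hc, mul_assoc]
  have hc2 : ∀ t : G, b*(X*t) = X*(b*t) := fun t => (hc1 t).symm
  have ih' : ∀ t : G, X*(a*(X*(a*t))) = a*(X*(a*(X*t))) := by
    intro t
    have h0 : X*(a*(X*a)) = a*(X*(a*X)) := by simpa [mul_assoc] using ih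
    calc X*(a*(X*(a*t))) = (X*(a*(X*a)))*t := by simp [mul_assoc]
    _ = (a*(X*(a*X)))*t := by rw [h0]
    _ = a*(X*(a*(X*t))) := by simp [mul_assoc]
  simp only [mul_assoc]
  conv_lhs => rw [hb' (X*(a*b)), hc1 (a*(b*(X*(a*b)))), hc2 (a*b),
    show b*(a*b) = a*(b*a) from by simpa [mul_assoc] using hb.symm]
  conv_rhs => rw [hb' (X*a), hc1 (a*(b*(X*a))), hc2 a,
    hbr (X*(a*(X*(b*a)))), ← ih' (b*a)]

end Generic

/-! ### Relations in `B n` -/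

lemma mk_rel_one {n : ℕ} {w : FreeGroup ℕ} (hw : w ∈ brels n) :
    PresentedGroup.mk (brels n) w = 1 :=
  (QuotientGroup.eq_one_iff w).2 (Subgroup.subset_normalClosure hw)

lemma mk_g {n : ℕ} (k : ℕ) : PresentedGroup.mk (brels n) (g k) = rh n k := rfl

lemma rh_junk {n : ℕ} (k : ℕ) (hk : n ≤ k) : rh n k = 1 := by
  have := mk_rel_one (n := n) (w := g k) (by left; left; left; exact ⟨k, hk, rfl⟩)
  simpa [mk_g] using this

lemma rel0 {n : ℕ} (hn : 2 ≤ n) :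
    rh n 0 * rh n 1 * rh n 0 * rh n 1 = rh n 1 * rh n 0 * rh n 1 * rh n 0 := by
  have := mk_rel_one (n := n) (w := (g 0 * g 1) ^ 2 * ((g 1 * g 0) ^ 2)⁻¹)
    (by left; left; right; exact ⟨hn, rfl⟩)
  rw [map_mul, map_inv, map_pow, map_pow, map_mul, map_mul, mk_g, mk_g, mul_inv_eq_one] at this
  have h2 : (rh n 0 * rh n 1) ^ 2 = (rh n 1 * rh n 0) ^ 2 := this
  group at h2 ⊢
  simpa [pow_two, mul_assoc] using h2

lemma braid {n : ℕ} (i : ℕ) (h1 : 1 ≤ i) (h2 : i + 1 ≤ n - 1) :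
    rh n i * rh n (i+1) * rh n i = rh n (i+1) * rh n i * rh n (i+1) := by
  have := mk_rel_one (n := n)
    (w := g i * g (i + 1) * g i * (g (i + 1) * g i * g (i + 1))⁻¹)
    (by left; right; exact ⟨i, h1, h2, rfl⟩)
  rw [map_mul, map_inv, map_mul, map_mul, map_mul, mk_g, mk_g, mul_inv_eq_one] at this
  simpa [mk_g] using this

lemma rcomm {n : ℕ} (i j : ℕ) (h1 : i + 2 ≤ j) (h2 : j ≤ n - 1) :
    rh n i * rh n j = rh n j * rh n i := by
  have := mk_rel_one (n := n) (w := g i * g j * (g j * g i)⁻¹)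
    (by right; exact ⟨i, j, h1, h2, rfl⟩)
  rw [map_mul, map_inv, map_mul, map_mul, mul_inv_eq_one] at this
  simpa [mk_g] using this

/-! ### Ascending and descending products -/

/-- ascending product `ρ_s ρ_{s+1} ⋯ ρ_{s+l-1}` -/
def asc (n s : ℕ) : ℕ → B n
  | 0 => 1
  | l+1 => asc n s l * rh n (s+l)

/-- descending product `ρ_{s+l-1} ⋯ ρ_{s+1} ρ_s` -/
def desc (n s : ℕ) : ℕ → B n
  | 0 => 1
  | l+1 => rh n (s+l) * desc n s l

/-- `X_a X_{a+1} ⋯ X_{a+l-1}` -/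
def xseg (n : ℕ) : ℕ → ℕ → B n
  | _, 0 => 1
  | a, l+1 => XX n a * xseg n (a+1) l

lemma asc_succ (n s l : ℕ) : asc n s (l+1) = asc n s l * rh n (s+l) := rfl
lemma desc_succ (n s l : ℕ) : desc n s (l+1) = rh n (s+l) * desc n s l := rfl
lemma xseg_succ (n a l : ℕ) : xseg n a (l+1) = XX n a * xseg n (a+1) l := rfl

lemma asc_succ' (n s l : ℕ) : asc n s (l+1) = rh n s * asc n (s+1) l := by
  induction l with
  | zero => simp [asc]
  | succ l ih =>
      rw [asc_succ, ih, asc_succ, mul_assoc, show s+(l+1)=s+1+l from by omega]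

lemma desc_succ' (n s l : ℕ) : desc n s (l+1) = desc n (s+1) l * rh n s := by
  induction l with
  | zero => simp [desc]
  | succ l ih =>
      rw [desc_succ, ih, desc_succ, ← mul_assoc, show s+(l+1)=s+1+l from by omega]

lemma xseg_succ' (n a l : ℕ) : xseg n a (l+1) = xseg n a l * XX n (a+l) := by
  induction l generalizing a with
  | zero => simp [xseg]
  | succ l ih =>
      rw [xseg_succ, ih, xseg_succ, ← mul_assoc, show a+(l+1)=a+1+l from by omega]

lemma list_asc (n m : ℕ) : ((List.range m).map (rh n)).prod = asc n 0 m := by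
  induction m with
  | zero => simp [asc]
  | succ m ih => rw [List.range_succ, List.map_append, List.prod_append, ih]; simp [asc_succ]

lemma list_asc1 (n l : ℕ) :
    ((List.range l).map fun k => rh n (k + 1)).prod = asc n 1 l := by
  induction l with
  | zero => simp [asc]
  | succ l ih =>
      rw [List.range_succ, List.map_append, List.prod_append, ih]
      simp [asc_succ, Nat.add_comm]

lemma list_desc1 (n l : ℕ) :
    (((List.range l).reverse.map fun k => rh n (k + 1)).prod) = desc n 1 l := by
  induction l with
  | zero => simp [desc]
  | succ l ih =>
      rw [List.range_succ, List.reverse_append]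
      simp only [List.reverse_cons, List.reverse_nil, List.nil_append, List.cons_append,
        List.map_cons, List.prod_cons]
      rw [ih, desc_succ]
      simp [Nat.add_comm]

lemma XX_eq (n i : ℕ) : XX n i = desc n 1 (i-1) * rh n 0 * asc n 1 (i-1) := by
  rw [XX, list_desc1, list_asc1]

lemma zeta_eq_asc (n : ℕ) : zeta n = asc n 0 n ^ n := by rw [zeta, list_asc]

lemma XX_one (n : ℕ) : XX n 1 = rh n 0 := by simp [XX_eq, asc, desc]

lemma XX_succ (n i : ℕ) (h : 1 ≤ i) : XX n (i+1) = rh n i * XX n i * rh n i := by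
  rw [XX_eq, XX_eq]
  have h1 : i + 1 - 1 = (i - 1) + 1 := by omega
  rw [h1, desc_succ, asc_succ]
  have h2 : 1 + (i - 1) = i := by omega
  rw [h2]
  group

lemma XX_conj (n j l : ℕ) (hj : 1 ≤ j) :
    XX n (j + l) = desc n j l * XX n j * asc n j l := by
  induction l with
  | zero => simp [asc, desc]
  | succ l ih =>
      have h : j + (l + 1) = (j + l) + 1 := by omega
      rw [h, XX_succ n (j+l) (by omega), ih, desc_succ, asc_succ]
      group

/-! ### Commutation lemmas -/

lemma comm_rh_asc_high (n k s l : ℕ) (h : s + l + 1 ≤ k) (hk : k ≤ n - 1) :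
    Commute (rh n k) (asc n s l) := by
  induction l with
  | zero => exact Commute.one_right _
  | succ l ih =>
      rw [asc_succ]
      have hx : Commute (rh n k) (rh n (s+l)) := ((rcomm (s+l) k (by omega) hk)).symm
      exact (ih (by omega)).mul_right hx

lemma comm_rh_desc_high (n k s l : ℕ) (h : s + l + 1 ≤ k) (hk : k ≤ n - 1) :
    Commute (rh n k) (desc n s l) := by
  induction l with
  | zero => exact Commute.one_right _
  | succ l ih =>
      rw [desc_succ]
      have hx : Commute (rh n k) (rh n (s+l)) := ((rcomm (s+l) k (by omega) hk)).symm
      exact hx.mul_right (ih (by omega))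

lemma comm_rh_asc_low (n k s l : ℕ) (h : k + 2 ≤ s) (h2 : s + l ≤ n) :
    Commute (rh n k) (asc n s l) := by
  induction l with
  | zero => exact Commute.one_right _
  | succ l ih =>
      rw [asc_succ]
      have hx : Commute (rh n k) (rh n (s+l)) := rcomm k (s+l) (by omega) (by omega)
      exact (ih (by omega)).mul_right hx

lemma comm_rh_desc_low (n k s l : ℕ) (h : k + 2 ≤ s) (h2 : s + l ≤ n) :
    Commute (rh n k) (desc n s l) := by
  induction l with
  | zero => exact Commute.one_right _
  | succ l ih =>
      rw [desc_succ]
      have hx : Commute (rh n k) (rh n (s+l)) := rcomm k (s+l) (by omega) (by omega)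
      exact hx.mul_right (ih (by omega))

lemma comm_rh_XX_high (n k i : ℕ) (h1 : 1 ≤ i) (hik : i + 1 ≤ k) (hk : k ≤ n - 1) :
    Commute (rh n k) (XX n i) := by
  rw [XX_eq]
  have hd : Commute (rh n k) (desc n 1 (i-1)) := comm_rh_desc_high n k 1 (i-1) (by omega) hk
  have h0 : Commute (rh n k) (rh n 0) := ((rcomm 0 k (by omega) hk)).symm
  have ha : Commute (rh n k) (asc n 1 (i-1)) := comm_rh_asc_high n k 1 (i-1) (by omega) hk
  exact (hd.mul_right h0).mul_right ha

lemma comm_XX_succ (n i : ℕ) (h1 : 1 ≤ i) (h2 : i + 1 ≤ n) :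
    Commute (XX n i) (XX n (i+1)) := by
  revert h2
  induction i, h1 using Nat.le_induction with
  | base =>
      intro h2
      have : XX n 2 = rh n 1 * XX n 1 * rh n 1 := XX_succ n 1 le_rfl
      show XX n 1 * XX n 2 = XX n 2 * XX n 1
      rw [this, XX_one]
      simp only [← mul_assoc]
      exact rel0 h2
  | succ i hi ih =>
      intro h2
      have hXi1 : XX n (i+1) = rh n i * XX n i * rh n i := XX_succ n i hi
      have hXi2 : XX n (i+2) = rh n (i+1) * (rh n i * XX n i * rh n i) * rh n (i+1) := by
        rw [show i+2 = (i+1)+1 from rfl, XX_succ n (i+1) (by omega), hXi1]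
      have hb : rh n i * rh n (i+1) * rh n i = rh n (i+1) * rh n i * rh n (i+1) :=
        braid i hi (by omega)
      have hc : rh n (i+1) * XX n i = XX n i * rh n (i+1) :=
        comm_rh_XX_high n (i+1) i hi le_rfl (by omega)
      have ihh : XX n i * (rh n i * XX n i * rh n i) = (rh n i * XX n i * rh n i) * XX n i := by
        rw [← hXi1]; exact ih (by omega)
      show XX n (i+1) * XX n (i+2) = XX n (i+2) * XX n (i+1)
      rw [hXi1, hXi2]
      exact key_step (rh n i) (rh n (i+1)) (XX n i) hb hc ihh

lemma comm_XX (n i j : ℕ) (h1 : 1 ≤ i) (hij : i ≤ j) (hj : j ≤ n) :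
    Commute (XX n i) (XX n j) := by
  revert hj
  induction j, hij using Nat.le_induction with
  | base => intro _; exact Commute.refl _
  | succ j hij ih =>
      intro hj
      rcases eq_or_lt_of_le hij with heq | hlt
      · subst heq; exact comm_XX_succ n i h1 hj
      · have hr : Commute (XX n i) (rh n j) :=
          (comm_rh_XX_high n j i h1 (by omega) (by omega)).symm
        rw [XX_succ n j (by omega)]
        exact (hr.mul_right (ih (by omega))).mul_right hr

lemma comm_rh_XX_low (n k i : ℕ) (h1 : 1 ≤ k) (h2 : k + 2 ≤ i) (h3 : i ≤ n) :
    Commute (rh n k) (XX n i) := by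
  have hconj : XX n i = desc n (k+2) (i-(k+2)) * XX n (k+2) * asc n (k+2) (i-(k+2)) := by
    have := XX_conj n (k+2) (i-(k+2)) (by omega)
    rwa [show (k+2) + (i-(k+2)) = i from by omega] at this
  have hd : Commute (rh n k) (desc n (k+2) (i-(k+2))) :=
    comm_rh_desc_low n k (k+2) (i-(k+2)) le_rfl (by omega)
  have ha : Commute (rh n k) (asc n (k+2) (i-(k+2))) :=
    comm_rh_asc_low n k (k+2) (i-(k+2)) le_rfl (by omega)
  have hmid : Commute (rh n k) (XX n (k+2)) := by
    have hb : rh n k * rh n (k+1) * rh n k = rh n (k+1) * rh n k * rh n (k+1) :=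
      braid k h1 (by omega)
    have hc : rh n (k+1) * XX n k = XX n k * rh n (k+1) :=
      comm_rh_XX_high n (k+1) k h1 le_rfl (by omega)
    have hX2 : XX n (k+2) = rh n (k+1) * (rh n k * XX n k * rh n k) * rh n (k+1) := by
      rw [show k+2 = (k+1)+1 from rfl, XX_succ n (k+1) (by omega), XX_succ n k h1]
    show rh n k * XX n (k+2) = XX n (k+2) * rh n k
    rw [hX2]
    exact key_low (rh n k) (rh n (k+1)) (XX n k) hb hc
  rw [hconj]
  exact (hd.mul_right hmid).mul_right ha



/-! ### The fundamental identity `ζ_n = X_1 ⋯ X_n` -/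

lemma shift (n m i : ℕ) (h1 : 1 ≤ i) (h2 : i + 2 ≤ m) (hm : m ≤ n) :
    asc n 0 m * rh n i = rh n (i+1) * asc n 0 m := by
  revert hm
  induction m, h2 using Nat.le_induction with
  | base =>
      intro hm
      have hcom : rh n (i+1) * asc n 0 i = asc n 0 i * rh n (i+1) :=
        comm_rh_asc_high n (i+1) 0 i (by omega) (by omega)
      have hb := braid (n := n) i h1 (by omega)
      rw [asc_succ, asc_succ, Nat.zero_add, Nat.zero_add]
      calc asc n 0 i * rh n i * rh n (i+1) * rh n i
          = asc n 0 i * (rh n i * rh n (i+1) * rh n i) := by simp [mul_assoc]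
        _ = asc n 0 i * (rh n (i+1) * rh n i * rh n (i+1)) := by rw [hb]
        _ = rh n (i+1) * (asc n 0 i * rh n i * rh n (i+1)) := by
            simp only [← mul_assoc]; rw [← hcom]
  | succ m hm2 ih =>
      intro hm
      have hcomm : rh n m * rh n i = rh n i * rh n m := (rcomm i m (by omega) (by omega)).symm
      rw [asc_succ, Nat.zero_add, mul_assoc, hcomm, ← mul_assoc, ih (by omega), mul_assoc]

lemma desc_shift (n b l m : ℕ) (hb : 2 ≤ b) (h : b + l ≤ m) (hm : m ≤ n) :
    desc n b l * asc n 0 m = asc n 0 m * desc n (b-1) l := by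
  induction l with
  | zero => simp [desc]
  | succ l ih =>
      have hs := shift n m (b+l-1) (by omega) (by omega) hm
      rw [desc_succ, desc_succ, mul_assoc, ih (by omega), ← mul_assoc,
        show b+l = (b+l-1)+1 from by omega, ← hs,
        show b-1+l = b+l-1 from by omega, mul_assoc]

lemma step_lemma (n m : ℕ) (h2 : 2 ≤ m) (hm : m ≤ n - 1) :
    rh n m * asc n 0 m * rh n m = asc n 0 m * rh n m * rh n (m-1) := by
  have hA : asc n 0 m = asc n 0 (m-2) * rh n (m-2) * rh n (m-1) := by
    rw [show m = (m-2)+1+1 from by omega, asc_succ, asc_succ, Nat.zero_add, Nat.zero_add,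
      show m-2+1+1-2 = m-2 from by omega, show m-2+1+1-1 = m-2+1 from by omega]
  have hc1 : Commute (rh n m) (asc n 0 (m-2)) :=
    comm_rh_asc_high n m 0 (m-2) (by omega) hm
  have hc2 : Commute (rh n m) (rh n (m-2)) := (rcomm (m-2) m (by omega) hm).symm
  have hb : rh n (m-1) * rh n m * rh n (m-1) = rh n m * rh n (m-1) * rh n m := by
    have := braid (n := n) (m-1) (by omega) (by rw [show m-1+1 = m from by omega]; exact hm)
    rwa [show m-1+1 = m from by omega] at this
  rw [hA]
  calc rh n m * (asc n 0 (m-2) * rh n (m-2) * rh n (m-1)) * rh n m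
      = asc n 0 (m-2) * rh n (m-2) * (rh n m * rh n (m-1) * rh n m) := by
        rw [← mul_assoc (rh n m), (hc1.mul_right hc2).eq]; simp only [mul_assoc]
    _ = asc n 0 (m-2) * rh n (m-2) * (rh n (m-1) * rh n m * rh n (m-1)) := by rw [← hb]
    _ = asc n 0 (m-2) * rh n (m-2) * rh n (m-1) * rh n m * rh n (m-1) := by
        simp only [mul_assoc]

lemma tail (n m k : ℕ) (h1 : 1 ≤ k) (h2 : k ≤ m) (hm : m + 1 ≤ n) :
    asc n 0 (m+1) ^ k = asc n 0 m ^ k * desc n (m-k+1) k := by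
  revert h2
  induction k, h1 using Nat.le_induction with
  | base =>
      intro h2
      rw [pow_one, pow_one, asc_succ, Nat.zero_add]
      congr 1
      rw [show (1 : ℕ) = 0 + 1 from rfl, desc_succ,
        show m - (0+1) + 1 + 0 = m from by omega]
      simp [desc]
  | succ k hk1 ih =>
      intro h2
      have hdesc1 : desc n (m-k+1) k = rh n m * desc n (m-k+1) (k-1) := by
        rw [show k = (k-1)+1 from by omega, desc_succ,
          show m-((k-1)+1)+1+(k-1) = m from by omega,
          show (k-1)+1-1 = k-1 from by omega]
      have hshift : desc n (m-k+1) (k-1) * asc n 0 m = asc n 0 m * desc n (m-k) (k-1) := by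
        have := desc_shift n (m-k+1) (k-1) m (by omega) (by omega) (by omega)
        rwa [show m-k+1-1 = m-k from by omega] at this
      have hcd : Commute (rh n m) (desc n (m-k) (k-1)) :=
        comm_rh_desc_high n m (m-k) (k-1) (by omega) (by omega)
      have hstep := step_lemma n m (by omega) (by omega)
      have hdesc2 : desc n (m-(k+1)+1) (k+1) = rh n m * rh n (m-1) * desc n (m-k) (k-1) := by
        rw [show m-(k+1)+1 = m-k from by omega, desc_succ,
          show m-k+k = m from by omega, show k = (k-1)+1 from by omega, desc_succ,
          show m-((k-1)+1)+(k-1) = m-1 from by omega, ← mul_assoc,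
          show (k-1)+1-1 = k-1 from by omega]
      calc asc n 0 (m+1) ^ (k+1)
          = asc n 0 (m+1) ^ k * asc n 0 (m+1) := pow_succ _ _
        _ = asc n 0 m ^ k * desc n (m-k+1) k * (asc n 0 m * rh n m) := by
            rw [ih (by omega), asc_succ, Nat.zero_add]
        _ = asc n 0 m ^ k * (rh n m * (desc n (m-k+1) (k-1) * asc n 0 m) * rh n m) := by
            rw [hdesc1]; simp only [mul_assoc]
        _ = asc n 0 m ^ k * (rh n m * asc n 0 m * (desc n (m-k) (k-1) * rh n m)) := by
            rw [hshift]; simp only [mul_assoc]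
        _ = asc n 0 m ^ k * (rh n m * asc n 0 m * rh n m * desc n (m-k) (k-1)) := by
            rw [← hcd.eq]; simp only [mul_assoc]
        _ = asc n 0 m ^ k * (asc n 0 m * (rh n m * rh n (m-1) * desc n (m-k) (k-1))) := by
            rw [hstep]; simp only [mul_assoc]
        _ = asc n 0 m ^ (k+1) * desc n (m-(k+1)+1) (k+1) := by
            rw [pow_succ, hdesc2]; simp only [mul_assoc]

lemma DX (n m : ℕ) (h2 : 2 ≤ m) (hm : m ≤ n) :
    asc n 0 m ^ m = asc n 0 (m-1) ^ (m-1) * XX n m := by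
  have ht : asc n 0 m ^ (m-1) = asc n 0 (m-1) ^ (m-1) * desc n 1 (m-1) := by
    have := tail n (m-1) (m-1) (by omega) le_rfl (by omega)
    rwa [show m-1+1 = m from by omega, show m-1-(m-1)+1 = 1 from by omega] at this
  have hasc : asc n 0 (m-1) = rh n 0 * asc n 1 (m-2) := by
    rw [show m-1 = (m-2)+1 from by omega, asc_succ', Nat.zero_add]
  have e1 : asc n 1 (m-1) = asc n 1 (m-2) * rh n (m-1) := by
    rw [show m-1 = (m-2)+1 from by omega, asc_succ, show 1+(m-2) = m-2+1 from by omega]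
  have hXX : XX n m = desc n 1 (m-1) * rh n 0 * (asc n 1 (m-2) * rh n (m-1)) := by
    rw [XX_eq, e1, mul_assoc]
  calc asc n 0 m ^ m = asc n 0 m ^ (m-1) * asc n 0 m := by
        rw [← pow_succ, show m-1+1 = m from by omega]
    _ = asc n 0 (m-1) ^ (m-1) * desc n 1 (m-1) * (asc n 0 (m-1) * rh n (m-1)) := by
        rw [ht, show m = (m-1)+1 from by omega, asc_succ, Nat.zero_add,
          show (m-1)+1-1 = m-1 from by omega]
    _ = asc n 0 (m-1) ^ (m-1) * (desc n 1 (m-1) * rh n 0 * (asc n 1 (m-2) * rh n (m-1))) := by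
        rw [hasc]; simp only [mul_assoc]
    _ = asc n 0 (m-1) ^ (m-1) * XX n m := by rw [← hXX]

lemma asc_pow_eq_xseg (n m : ℕ) (h1 : 1 ≤ m) (hm : m ≤ n) :
    asc n 0 m ^ m = xseg n 1 m := by
  revert hm
  induction m, h1 using Nat.le_induction with
  | base =>
      intro _
      rw [pow_one, asc_succ, Nat.zero_add, xseg_succ, XX_one]
      simp [asc, xseg]
  | succ m hm1 ih =>
      intro hm
      have hdx := DX n (m+1) (by omega) hm
      rw [hdx, show m+1-1 = m from by omega, ih (by omega), xseg_succ',
        show 1+m = m+1 from by omega]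

lemma zeta_eq_xseg (n : ℕ) (hn : 1 ≤ n) : zeta n = xseg n 1 n := by
  rw [zeta_eq_asc, asc_pow_eq_xseg n n hn le_rfl]



/-! ### The automorphism `ε` -/

lemma rel0_pow {n : ℕ} (hn : 2 ≤ n) :
    (rh n 0 * rh n 1) ^ 2 = (rh n 1 * rh n 0) ^ 2 := by
  have := mk_rel_one (n := n) (w := (g 0 * g 1) ^ 2 * ((g 1 * g 0) ^ 2)⁻¹)
    (by left; left; right; exact ⟨hn, rfl⟩)
  rw [map_mul, map_inv, map_pow, map_pow, map_mul, map_mul, mk_g, mk_g, mul_inv_eq_one] at this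
  exact this

lemma eps_rels (n : ℕ) :
    ∀ w ∈ brels n, FreeGroup.lift (fun k => (rh n k)⁻¹) w = 1 := by
  rintro w (((⟨k, hk, rfl⟩ | ⟨hn, rfl⟩) | ⟨i, h1, h2, rfl⟩) | ⟨i, j, h1, h2, rfl⟩)
  · simp only [g, FreeGroup.lift_apply_of]
    rw [rh_junk k hk]; simp
  · simp only [g, map_mul, map_inv, map_pow, FreeGroup.lift_apply_of]
    rw [mul_inv_eq_one, ← mul_inv_rev, ← mul_inv_rev, inv_pow, inv_pow, inv_inj]
    exact (rel0_pow hn).symm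
  · simp only [g, map_mul, map_inv, FreeGroup.lift_apply_of]
    rw [mul_inv_eq_one]
    simp only [← mul_inv_rev]
    rw [inv_inj]
    simpa [mul_assoc] using braid i h1 h2
  · simp only [g, map_mul, map_inv, FreeGroup.lift_apply_of]
    rw [mul_inv_eq_one]
    simp only [← mul_inv_rev]
    rw [inv_inj]
    exact (rcomm i j h1 h2).symm

/-- The homomorphism `ε : ρ_k ↦ ρ_k⁻¹`. -/
def epsHom (n : ℕ) : B n →* B n := PresentedGroup.toGroup (eps_rels n)

@[simp] lemma eps_of (n k : ℕ) : epsHom n (rh n k) = (rh n k)⁻¹ :=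
  PresentedGroup.toGroup.of _

lemma eps_invol (n : ℕ) : (epsHom n).comp (epsHom n) = MonoidHom.id _ := by
  apply PresentedGroup.ext
  intro x
  have : PresentedGroup.of (rels := brels n) x = rh n x := rfl
  simp [this]

/-- `ε` as an automorphism. -/
def epsAut (n : ℕ) : MulAut (B n) where
  toFun := epsHom n
  invFun := epsHom n
  left_inv x := by
    have := DFunLike.congr_fun (eps_invol n) x
    simpa using this
  right_inv x := by
    have := DFunLike.congr_fun (eps_invol n) x
    simpa using this
  map_mul' := map_mul _

lemma eps_asc (n s l : ℕ) : epsHom n (asc n s l) = (desc n s l)⁻¹ := by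
  induction l with
  | zero => simp [asc, desc]
  | succ l ih =>
      rw [asc_succ, map_mul, ih, eps_of, desc_succ, mul_inv_rev]

/-! ### The reversal anti-automorphism -/

open MulOpposite in
lemma rev_rels (n : ℕ) :
    ∀ w ∈ brels n, FreeGroup.lift (fun k => op (rh n k)) w = 1 := by
  rintro w (((⟨k, hk, rfl⟩ | ⟨hn, rfl⟩) | ⟨i, h1, h2, rfl⟩) | ⟨i, j, h1, h2, rfl⟩)
  · simp only [g, FreeGroup.lift_apply_of]
    rw [rh_junk k hk]; simp
  · simp only [g, map_mul, map_inv, map_pow, FreeGroup.lift_apply_of]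
    simp only [← op_mul, ← op_pow, ← op_inv, op_eq_one_iff]
    rw [inv_mul_eq_one]
    exact rel0_pow hn
  · simp only [g, map_mul, map_inv, FreeGroup.lift_apply_of]
    simp only [← op_mul, ← op_inv, op_eq_one_iff]
    rw [inv_mul_eq_one]
    simpa [mul_assoc] using (braid i h1 h2).symm
  · simp only [g, map_mul, map_inv, FreeGroup.lift_apply_of]
    simp only [← op_mul, ← op_inv, op_eq_one_iff]
    rw [inv_mul_eq_one]
    exact rcomm i j h1 h2

/-- The reversal anti-automorphism, as a homomorphism to the opposite group. -/
def revHom (n : ℕ) : B n →* (B n)ᵐᵒᵖ := PresentedGroup.toGroup (rev_rels n)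

@[simp] lemma rev_of (n k : ℕ) : revHom n (rh n k) = MulOpposite.op (rh n k) :=
  PresentedGroup.toGroup.of _

open MulOpposite in
lemma rev_asc (n s l : ℕ) : revHom n (asc n s l) = op (desc n s l) := by
  induction l with
  | zero => simp [asc, desc]
  | succ l ih => rw [asc_succ, map_mul, ih, rev_of, desc_succ, ← op_mul]

open MulOpposite in
lemma rev_desc (n s l : ℕ) : revHom n (desc n s l) = op (asc n s l) := by
  induction l with
  | zero => simp [asc, desc]
  | succ l ih => rw [desc_succ, map_mul, ih, rev_of, asc_succ, ← op_mul]

open MulOpposite in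
lemma rev_XX (n i : ℕ) : revHom n (XX n i) = op (XX n i) := by
  rw [XX_eq, map_mul, map_mul, rev_desc, rev_asc, rev_of, ← op_mul, ← op_mul]
  simp [mul_assoc]

lemma comm_XX_xseg (n a b l : ℕ) (h1 : 1 ≤ a) (hab : a ≤ b) (h2 : b + l ≤ n + 1) :
    Commute (XX n a) (xseg n b l) := by
  induction l generalizing b with
  | zero => exact Commute.one_right _
  | succ l ih =>
      rw [xseg_succ]
      exact (comm_XX n a b h1 hab (by omega)).mul_right (ih (b+1) (by omega) (by omega))

open MulOpposite in
lemma rev_xseg (n a l : ℕ) (h1 : 1 ≤ a) (h2 : a + l ≤ n + 1) :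
    revHom n (xseg n a l) = op (xseg n a l) := by
  induction l generalizing a with
  | zero => simp [xseg]
  | succ l ih =>
      rw [xseg_succ, map_mul, rev_XX, ih (a+1) (by omega) (by omega), ← op_mul,
        (comm_XX_xseg n a (a+1) l h1 (by omega) (by omega)).eq]

open MulOpposite in
lemma desc_pow_eq_zeta (n : ℕ) (hn : 1 ≤ n) : (desc n 0 n) ^ n = zeta n := by
  apply op_injective
  have h1 : revHom n (zeta n) = op ((desc n 0 n) ^ n) := by
    rw [zeta_eq_asc, map_pow, rev_asc, op_pow]
  have h2 : revHom n (zeta n) = op (zeta n) := by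
    rw [zeta_eq_xseg n hn, rev_xseg n 1 n le_rfl (by omega)]
  rw [← h1, h2]

lemma eps_zeta (n : ℕ) (hn : 1 ≤ n) : epsHom n (zeta n) = (zeta n)⁻¹ := by
  rw [zeta_eq_asc, map_pow, eps_asc, inv_pow, desc_pow_eq_zeta n hn, ← zeta_eq_asc]



/-! ### The automorphism `Δ` -/

/-- The defining map of `Δ` on generators. -/
def fdel (n : ℕ) : ℕ → B n := fun k =>
  if k = 0 then (XX n n)⁻¹ else if k + 1 ≤ n then rh n (n - k) else 1

lemma fdel_zero (n : ℕ) : fdel n 0 = (XX n n)⁻¹ := rfl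

lemma fdel_mid (n k : ℕ) (h1 : 1 ≤ k) (h2 : k + 1 ≤ n) : fdel n k = rh n (n - k) := by
  unfold fdel
  rw [if_neg (by omega), if_pos h2]

lemma fdel_high (n k : ℕ) (hn : 1 ≤ n) (h : n ≤ k) : fdel n k = 1 := by
  unfold fdel
  rw [if_neg (by omega), if_neg (by omega)]

lemma del_rels (n : ℕ) (hn : 2 ≤ n) :
    ∀ w ∈ brels n, FreeGroup.lift (fdel n) w = 1 := by
  rintro w (((⟨k, hk, rfl⟩ | ⟨_, rfl⟩) | ⟨i, h1, h2, rfl⟩) | ⟨i, j, h1, h2, rfl⟩)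
  · simp only [g, FreeGroup.lift_apply_of]
    rw [fdel_high n k (by omega) hk]
  · simp only [g, map_mul, map_inv, map_pow, FreeGroup.lift_apply_of]
    rw [fdel_zero, fdel_mid n 1 le_rfl (by omega), mul_inv_eq_one]
    set x := XX n n with hx
    set y := XX n (n-1) with hy
    set c := rh n (n-1) with hc
    have hrec : x = c * y * c := by
      have := XX_succ n (n-1) (by omega)
      rwa [show n-1+1 = n from by omega] at this
    have hcomm : y * x = x * y := by
      have := (comm_XX_succ n (n-1) (by omega) (by omega)).eq
      rwa [show n-1+1 = n from by omega] at this
    have hyinv : c * x⁻¹ * c = y⁻¹ := by rw [hrec]; group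
    calc (x⁻¹ * c) ^ 2 = x⁻¹ * (c * x⁻¹ * c) := by rw [pow_two]; group
      _ = x⁻¹ * y⁻¹ := by rw [hyinv]
      _ = (y * x)⁻¹ := by rw [mul_inv_rev]
      _ = (x * y)⁻¹ := by rw [hcomm]
      _ = y⁻¹ * x⁻¹ := by rw [mul_inv_rev]
      _ = (c * x⁻¹ * c) * x⁻¹ := by rw [hyinv]
      _ = (c * x⁻¹) ^ 2 := by rw [pow_two]; group
  · simp only [g, map_mul, map_inv, FreeGroup.lift_apply_of]
    rw [fdel_mid n i h1 (by omega), fdel_mid n (i+1) (by omega) (by omega), mul_inv_eq_one]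
    have hb := braid (n := n) (n-i-1) (by omega) (by omega)
    rw [show n-i-1+1 = n-i from by omega] at hb
    rw [show n-(i+1) = n-i-1 from by omega]
    exact hb.symm
  · simp only [g, map_mul, map_inv, FreeGroup.lift_apply_of]
    rcases Nat.eq_zero_or_pos i with hi0 | hi1
    · subst hi0
      rw [fdel_zero, fdel_mid n j (by omega) (by omega), mul_inv_eq_one]
      have hcm : Commute (rh n (n-j)) (XX n n) :=
        comm_rh_XX_low n (n-j) n (by omega) (by omega) le_rfl
      exact (hcm.inv_right.symm).eq
    · rw [fdel_mid n i hi1 (by omega), fdel_mid n j (by omega) (by omega), mul_inv_eq_one]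
      exact (rcomm (n-j) (n-i) (by omega) (by omega)).symm

/-- The homomorphism `Δ`. -/
def delHom (n : ℕ) (hn : 2 ≤ n) : B n →* B n := PresentedGroup.toGroup (del_rels n hn)

lemma del_of (n : ℕ) (hn : 2 ≤ n) (k : ℕ) : delHom n hn (rh n k) = fdel n k :=
  PresentedGroup.toGroup.of _

lemma del_rh_zero (n : ℕ) (hn : 2 ≤ n) : delHom n hn (rh n 0) = (XX n n)⁻¹ := del_of n hn 0

lemma del_rh_mid (n : ℕ) (hn : 2 ≤ n) (k : ℕ) (h1 : 1 ≤ k) (h2 : k ≤ n - 1) :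
    delHom n hn (rh n k) = rh n (n - k) := by
  rw [del_of, fdel_mid n k h1 (by omega)]

lemma del_asc1 (n : ℕ) (hn : 2 ≤ n) (l : ℕ) (hl : l ≤ n - 1) :
    delHom n hn (asc n 1 l) = desc n (n - l) l := by
  induction l with
  | zero => simp [asc, desc]
  | succ l ih =>
      rw [asc_succ, map_mul, ih (by omega), del_rh_mid n hn (1+l) (by omega) (by omega)]
      rw [show desc n (n-(l+1)) (l+1) = desc n ((n-(l+1))+1) l * rh n (n-(l+1)) from
        desc_succ' n _ l, show n-(l+1)+1 = n-l from by omega,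
        show n-(1+l) = n-(l+1) from by omega]

lemma del_desc1 (n : ℕ) (hn : 2 ≤ n) (l : ℕ) (hl : l ≤ n - 1) :
    delHom n hn (desc n 1 l) = asc n (n - l) l := by
  induction l with
  | zero => simp [asc, desc]
  | succ l ih =>
      rw [desc_succ, map_mul, ih (by omega), del_rh_mid n hn (1+l) (by omega) (by omega)]
      rw [show asc n (n-(l+1)) (l+1) = rh n (n-(l+1)) * asc n ((n-(l+1))+1) l from
        asc_succ' n _ l, show n-(l+1)+1 = n-l from by omega,
        show n-(1+l) = n-(l+1) from by omega]

lemma del_XX (n : ℕ) (hn : 2 ≤ n) (i : ℕ) (h1 : 1 ≤ i) (h2 : i ≤ n) :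
    delHom n hn (XX n i) = (XX n (n - i + 1))⁻¹ := by
  rw [XX_eq, map_mul, map_mul, del_desc1 n hn (i-1) (by omega),
    del_asc1 n hn (i-1) (by omega), del_rh_zero,
    show n-(i-1) = n-i+1 from by omega]
  have hconj : XX n n = desc n (n-i+1) (i-1) * XX n (n-i+1) * asc n (n-i+1) (i-1) := by
    have := XX_conj n (n-i+1) (i-1) (by omega)
    rwa [show n-i+1+(i-1) = n from by omega] at this
  rw [hconj]
  group

lemma del_xseg (n : ℕ) (hn : 2 ≤ n) (m : ℕ) (hm : m ≤ n) :
    delHom n hn (xseg n 1 m) = (xseg n (n - m + 1) m)⁻¹ := by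
  induction m with
  | zero => simp [xseg]
  | succ m ih =>
      rw [xseg_succ', map_mul, ih (by omega), del_XX n hn (1+m) (by omega) (by omega),
        show n-(1+m) = n-(m+1) from by omega, ← mul_inv_rev]
      congr 1
      rw [xseg_succ, show n-(m+1)+1+1 = n-m+1 from by omega]

lemma del_zeta (n : ℕ) (hn : 2 ≤ n) : delHom n hn (zeta n) = (zeta n)⁻¹ := by
  rw [zeta_eq_xseg n (by omega), del_xseg n hn n le_rfl,
    show n-n+1 = 1 from by omega]

lemma del_invol (n : ℕ) (hn : 2 ≤ n) :
    (delHom n hn).comp (delHom n hn) = MonoidHom.id _ := by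
  apply PresentedGroup.ext
  intro x
  have hofx : PresentedGroup.of (rels := brels n) x = rh n x := rfl
  rcases Nat.eq_zero_or_pos x with h0 | h1
  · subst h0
    simp only [MonoidHom.comp_apply, MonoidHom.id_apply, hofx]
    rw [del_rh_zero, map_inv, del_XX n hn n (by omega) le_rfl,
      show n-n+1 = 1 from by omega, XX_one, inv_inv]
  · rcases Nat.lt_or_ge x n with hx | hx
    · simp only [MonoidHom.comp_apply, MonoidHom.id_apply, hofx]
      rw [del_rh_mid n hn x h1 (by omega), del_rh_mid n hn (n-x) (by omega) (by omega),
        show n-(n-x) = x from by omega]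
    · simp only [MonoidHom.comp_apply, MonoidHom.id_apply, hofx]
      rw [rh_junk x hx, map_one, map_one]

/-- `Δ` as an automorphism. -/
def delAut (n : ℕ) (hn : 2 ≤ n) : MulAut (B n) where
  toFun := delHom n hn
  invFun := delHom n hn
  left_inv x := by
    have := DFunLike.congr_fun (del_invol n hn) x
    simpa using this
  right_inv x := by
    have := DFunLike.congr_fun (del_invol n hn) x
    simpa using this
  map_mul' := map_mul _



/-! ### Invariance of the pure monomial braid group -/

lemma Pm_eq_NG (r n : ℕ) : Pm r n = NG r n := QuotientGroup.ker_mk' _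

lemma grels_sub (r n : ℕ) : grels r n ⊆ ↑(Pm r n) := by
  rw [Pm_eq_NG]
  exact Subgroup.subset_normalClosure

lemma q_sq (r n k : ℕ) (h1 : 1 ≤ k) (h2 : k ≤ n - 1) :
    (QuotientGroup.mk' (NG r n)) (rh n k) ^ 2 = 1 := by
  rw [← map_pow]
  have hmem : rh n k ^ 2 ∈ NG r n :=
    Subgroup.subset_normalClosure (Or.inr ⟨k, h1, h2, rfl⟩)
  rwa [← QuotientGroup.ker_mk' (NG r n), MonoidHom.mem_ker] at hmem

lemma q_asc_desc (r n l : ℕ) (hl : l ≤ n - 1) :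
    (QuotientGroup.mk' (NG r n)) (asc n 1 l) * (QuotientGroup.mk' (NG r n)) (desc n 1 l) = 1 := by
  induction l with
  | zero => simp [asc, desc]
  | succ l ih =>
      rw [asc_succ, desc_succ, map_mul, map_mul]
      set q := QuotientGroup.mk' (NG r n)
      calc q (asc n 1 l) * q (rh n (1+l)) * (q (rh n (1+l)) * q (desc n 1 l))
          = q (asc n 1 l) * (q (rh n (1+l)) ^ 2 * q (desc n 1 l)) := by
            rw [pow_two]; simp only [mul_assoc]
        _ = q (asc n 1 l) * q (desc n 1 l) := by
            rw [q_sq r n (1+l) (by omega) (by omega), one_mul]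
        _ = 1 := ih (by omega)

lemma XN_pow_mem (r n : ℕ) (hn : 2 ≤ n) : (XX n n) ^ r ∈ Pm r n := by
  have : Pm r n = MonoidHom.ker (QuotientGroup.mk' (NG r n)) := rfl
  rw [this, MonoidHom.mem_ker, map_pow]
  set q := QuotientGroup.mk' (NG r n) with hq
  have hinv : q (asc n 1 (n-1)) = (q (desc n 1 (n-1)))⁻¹ :=
    eq_inv_of_mul_eq_one_left (by
      exact q_asc_desc r n (n-1) le_rfl)
  have hX : q (XX n n) = q (desc n 1 (n-1)) * q (rh n 0) * (q (desc n 1 (n-1)))⁻¹ := by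
    rw [XX_eq, map_mul, map_mul, hinv]
  have h0 : q (rh n 0) ^ r = 1 := by
    rw [← map_pow]
    have hmem : rh n 0 ^ r ∈ NG r n :=
      Subgroup.subset_normalClosure (Or.inl rfl)
    rwa [← QuotientGroup.ker_mk' (NG r n), MonoidHom.mem_ker] at hmem
  rw [hX, conj_pow, h0, mul_one, mul_inv_cancel]

instance Pm_normal (r n : ℕ) : (Pm r n).Normal := MonoidHom.normal_ker _

lemma map_P_of (r n : ℕ) (e : MulAut (B n))
    (h1 : ∀ s ∈ grels r n, e s ∈ Pm r n) (h2 : ∀ s ∈ grels r n, e.symm s ∈ Pm r n) :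
    Subgroup.map e.toMonoidHom (Pm r n) = Pm r n := by
  have key : ∀ (f : MulAut (B n)), (∀ s ∈ grels r n, f s ∈ Pm r n) →
      Subgroup.map f.toMonoidHom (Pm r n) ≤ Pm r n := by
    intro f hf
    have hmap : Subgroup.map f.toMonoidHom (Pm r n) =
        Subgroup.normalClosure (f.toMonoidHom '' grels r n) := by
      rw [Pm_eq_NG]
      exact Subgroup.map_normalClosure _ _ f.surjective
    rw [hmap]
    apply Subgroup.normalClosure_le_normal
    rintro x ⟨s, hs, rfl⟩
    exact hf s hs
  refine le_antisymm (key e h1) ?_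
  have h2' := key e.symm h2
  calc Pm r n = Subgroup.map e.toMonoidHom (Subgroup.map e.symm.toMonoidHom (Pm r n)) := by
        rw [Subgroup.map_map]
        have hco : (e.toMonoidHom.comp e.symm.toMonoidHom) = MonoidHom.id _ := by
          ext x; simp
        rw [hco, Subgroup.map_id]
    _ ≤ Subgroup.map e.toMonoidHom (Pm r n) := Subgroup.map_mono h2'


/-- For `r ≥ 2` and `n ≥ 2`: `ε(ρ_i) = ρ_i⁻¹` extends to an automorphism `ε` of `B(r,n)`;
`Δ(ρ_0) = (ρ_{n-1}⋯ρ_1ρ_0ρ_1⋯ρ_{n-1})⁻¹ = X_n⁻¹`, `Δ(ρ_i) = ρ_{n-i}` extends to an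
automorphism `Δ` of `B(r,n)`; both send `ζ_n` to `ζ_n⁻¹`; `Δ(X_i) = X_{n-i+1}⁻¹` for
`1 ≤ i ≤ n`; and both map the subgroup `P(r,n)` onto itself. -/
theorem eps_Delta_autos (r n : ℕ) (hr : 2 ≤ r) (hn : 2 ≤ n) :
    ∃ ε Δ : MulAut (B n),
      (∀ i, i ≤ n - 1 → ε (rh n i) = (rh n i)⁻¹) ∧
      Δ (rh n 0) = (XX n n)⁻¹ ∧
      (∀ i, 1 ≤ i → i ≤ n - 1 → Δ (rh n i) = rh n (n - i)) ∧
      ε (zeta n) = (zeta n)⁻¹ ∧ Δ (zeta n) = (zeta n)⁻¹ ∧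
      (∀ i, 1 ≤ i → i ≤ n → Δ (XX n i) = (XX n (n - i + 1))⁻¹) ∧
      Subgroup.map ε.toMonoidHom (Pm r n) = Pm r n ∧
      Subgroup.map Δ.toMonoidHom (Pm r n) = Pm r n := by
  have heps1 : ∀ s ∈ grels r n, epsHom n s ∈ Pm r n := by
    rintro s (rfl | ⟨i, h1, h2, rfl⟩)
    · rw [map_pow, eps_of, inv_pow]
      exact Subgroup.inv_mem _ (grels_sub r n (Or.inl rfl))
    · rw [map_pow, eps_of, inv_pow]
      exact Subgroup.inv_mem _ (grels_sub r n (Or.inr ⟨i, h1, h2, rfl⟩))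
  have hdel1 : ∀ s ∈ grels r n, delHom n hn s ∈ Pm r n := by
    rintro s (rfl | ⟨i, h1, h2, rfl⟩)
    · rw [map_pow, del_rh_zero, inv_pow]
      exact Subgroup.inv_mem _ (XN_pow_mem r n hn)
    · rw [map_pow, del_rh_mid n hn i h1 h2]
      exact grels_sub r n (Or.inr ⟨n - i, by omega, by omega, rfl⟩)
  refine ⟨epsAut n, delAut n hn, ?_, ?_, ?_, ?_, ?_, ?_, ?_, ?_⟩
  · intro i _; exact eps_of n i
  · exact del_rh_zero n hn
  · intro i h1 h2; exact del_rh_mid n hn i h1 h2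
  · exact eps_zeta n (by omega)
  · exact del_zeta n hn
  · intro i h1 h2; exact del_XX n hn i h1 h2
  · exact map_P_of r n (epsAut n) heps1 heps1
  · exact map_P_of r n (delAut n hn) hdel1 hdel1

end MonomialBraid
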